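/- arXiv:2504.05162 — 11 statements merged into one kernel-verified Lean document; each statement's English description precedes it below -/
import Mathlib

section
/- Let H be a 1-intersecting k-uniform hypergraph that is not a sunflower. Then every vertex of H has degree at most k. -/
/-- In a 1-intersecting k-uniform hypergraph that is not a sunflower,
every vertex has degree at most k. -/
theorem degree_le_of_one_intersecting_not_sunflower {V : Type*} [Fintype V] [DecidableEq V]
    (k : ℕ) (H : Finset (Finset V))
    (hunif : ∀ e ∈ H, e.card = k)
    (hint : ∀ e ∈ H, ∀ f ∈ H, e ≠ f → (e ∩ f).card = 1)
    (hnsun : ¬ ∃ C : Finset V, ∀ e ∈ H, ∀ f ∈ H, e ≠ f → e ∩ f = C) :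
    ∀ v : V, (H.filter (fun e => v ∈ e)).card ≤ k := by
  intro v
  push_neg at hnsun
  obtain ⟨e, he, f, hf, hef, hefne⟩ := hnsun {v}
  have key : ∀ a ∈ H, ∀ b ∈ H, a ≠ b → v ∈ a → v ∈ b → a ∩ b = {v} := by
    intro a ha b hb hab hva hvb
    obtain ⟨w, hw⟩ := Finset.card_eq_one.mp (hint a ha b hb hab)
    have hv : v ∈ a ∩ b := Finset.mem_inter.mpr ⟨hva, hvb⟩
    rw [hw] at hv ⊢
    rw [Finset.mem_singleton] at hv
    rw [hv]
  have hg : ∃ g ∈ H, v ∉ g := by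
    by_cases hve : v ∈ e
    · exact ⟨f, hf, fun hvf => hefne (key e he f hf hef hve hvf)⟩
    · exact ⟨e, he, hve⟩
  obtain ⟨g, hgH, hvg⟩ := hg
  rw [← hunif g hgH]
  apply Finset.card_le_card_of_injOn
    (fun a => if h : (a ∩ g).Nonempty then h.choose else v)
  · intro a ha
    rw [Finset.mem_coe, Finset.mem_filter] at ha
    have hag : a ≠ g := fun h => hvg (h ▸ ha.2)
    have hcard : (a ∩ g).card = 1 := hint a ha.1 g hgH hag
    have hne : (a ∩ g).Nonempty := Finset.card_pos.mp (by omega)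
    simp only [dif_pos hne]
    exact (Finset.mem_inter.mp hne.choose_spec).2
  · intro a ha b hb heq
    simp only [Finset.mem_coe, Finset.mem_filter] at ha hb
    by_contra hab
    have hag : a ≠ g := fun h => hvg (h ▸ ha.2)
    have hbg : b ≠ g := fun h => hvg (h ▸ hb.2)
    have hnea : (a ∩ g).Nonempty := Finset.card_pos.mp (by
      have := hint a ha.1 g hgH hag; omega)
    have hneb : (b ∩ g).Nonempty := Finset.card_pos.mp (by
      have := hint b hb.1 g hgH hbg; omega)
    simp only [dif_pos hnea, dif_pos hneb] at heq
    have hwa : hnea.choose ∈ a ∩ g := hnea.choose_spec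
    have hwb : hnea.choose ∈ b ∩ g := heq ▸ hneb.choose_spec
    have hwab : hnea.choose ∈ a ∩ b :=
      Finset.mem_inter.mpr ⟨(Finset.mem_inter.mp hwa).1, (Finset.mem_inter.mp hwb).1⟩
    rw [key a ha.1 b hb.1 hab ha.2 hb.2, Finset.mem_singleton] at hwab
    exact hvg (hwab ▸ (Finset.mem_inter.mp hwa).2)
end

section
/- Let H be a 1-intersecting k-uniform hypergraph that is not a sunflower. Then |E(H)| ≤ k². -/
/-!
Fix an edge `e`. Every edge meets `e`, so `|E(H)| ≤ ∑_{v ∈ e} deg v`. Since `H` is not a sunflower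
with core `{v}`, some edge `g` misses `v`; the edges through `v` meet `g` in pairwise distinct
points (two of them already share `v`), so `deg v ≤ |g| = k`.
-/

open Finset

section

variable {V : Type*} [DecidableEq V]

def IsSunflower (H : Finset (Finset V)) : Prop :=
  ∃ C : Finset V, ∀ e ∈ H, ∀ f ∈ H, e ≠ f → e ∩ f = C

def edgesThrough (H : Finset (Finset V)) (v : V) : Finset (Finset V) :=
  H.filter (v ∈ ·)

@[simp]
lemma mem_edgesThrough {H : Finset (Finset V)} {v : V} {e : Finset V} :
    e ∈ edgesThrough H v ↔ e ∈ H ∧ v ∈ e :=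
  mem_filter

lemma isSunflower_of_card_le_one {H : Finset (Finset V)} (hH : #H ≤ 1) : IsSunflower H :=
  ⟨∅, fun _ he _ hf hef => absurd (card_le_one.1 hH _ he _ hf) hef⟩

lemma isSunflower_of_forall_mem {H : Finset (Finset V)} {v : V}
    (hint : ∀ e ∈ H, ∀ f ∈ H, e ≠ f → #(e ∩ f) = 1) (hv : ∀ e ∈ H, v ∈ e) :
    IsSunflower H := by
  refine ⟨{v}, fun e he f hf hef => ?_⟩
  obtain ⟨w, hw⟩ := card_eq_one.1 (hint e he f hf hef)
  have : v ∈ e ∩ f := mem_inter.2 ⟨hv e he, hv f hf⟩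
  rw [hw, mem_singleton] at this
  rw [hw, this]

lemma card_le_sum_card_edgesThrough {H : Finset (Finset V)} {e : Finset V}
    (hmeet : ∀ f ∈ H, (e ∩ f).Nonempty) : #H ≤ ∑ v ∈ e, #(edgesThrough H v) := by
  have hcover : H ⊆ e.biUnion (edgesThrough H) := fun f hf => by
    obtain ⟨v, hv⟩ := hmeet f hf
    exact mem_biUnion.2 ⟨v, (mem_inter.1 hv).1, mem_edgesThrough.2 ⟨hf, (mem_inter.1 hv).2⟩⟩
  exact (card_le_card hcover).trans card_biUnion_le

lemma card_edgesThrough_le_card {H : Finset (Finset V)} {v : V} {g : Finset V}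
    (hlin : ∀ a ∈ H, ∀ b ∈ H, a ≠ b → #(a ∩ b) ≤ 1)
    (hmeet : ∀ a ∈ edgesThrough H v, (a ∩ g).Nonempty) (hvg : v ∉ g) :
    #(edgesThrough H v) ≤ #g := by
  refine card_le_card_of_forall_subsingleton (fun a x => x ∈ a) (fun a ha => ?_) fun x hx => ?_
  · obtain ⟨x, hx⟩ := hmeet a ha
    exact ⟨x, (mem_inter.1 hx).2, (mem_inter.1 hx).1⟩
  · rintro a ⟨ha, hxa⟩ b ⟨hb, hxb⟩
    rw [mem_edgesThrough] at ha hb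
    by_contra hab
    have hvx : v = x := card_le_one.1 (hlin a ha.1 b hb.1 hab) v (mem_inter.2 ⟨ha.2, hb.2⟩) x
      (mem_inter.2 ⟨hxa, hxb⟩)
    exact hvg (hvx ▸ hx)

lemma card_edgesThrough_le_of_not_isSunflower {H : Finset (Finset V)} {k : ℕ}
    (hunif : ∀ e ∈ H, #e = k) (hint : ∀ e ∈ H, ∀ f ∈ H, e ≠ f → #(e ∩ f) = 1)
    (hnsun : ¬ IsSunflower H) (v : V) : #(edgesThrough H v) ≤ k := by
  obtain ⟨g, hg, hvg⟩ : ∃ g ∈ H, v ∉ g := by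
    by_contra! h
    exact hnsun (isSunflower_of_forall_mem hint h)
  have hmeet : ∀ a ∈ edgesThrough H v, (a ∩ g).Nonempty := fun a ha => by
    rw [mem_edgesThrough] at ha
    exact one_le_card.1 (hint a ha.1 g hg (ne_of_mem_of_not_mem' ha.2 hvg)).ge
  exact hunif g hg ▸ card_edgesThrough_le_card (fun a ha b hb hab => (hint a ha b hb hab).le)
    hmeet hvg

end

theorem card_le_sq_of_one_intersecting_not_sunflower_general {V : Type*} [DecidableEq V]
    (k : ℕ) (H : Finset (Finset V))
    (hunif : ∀ e ∈ H, e.card = k)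
    (hint : ∀ e ∈ H, ∀ f ∈ H, e ≠ f → (e ∩ f).card = 1)
    (hnsun : ¬ ∃ C : Finset V, ∀ e ∈ H, ∀ f ∈ H, e ≠ f → e ∩ f = C) :
    H.card ≤ k ^ 2 := by
  obtain ⟨e, he, f, hf, hef⟩ := one_lt_card.1 <|
    lt_of_not_ge fun hH => hnsun (isSunflower_of_card_le_one hH)
  have hmeet : ∀ g ∈ H, (e ∩ g).Nonempty := by
    intro g hg
    obtain rfl | hge := eq_or_ne g e
    · rw [inter_self]
      exact (one_le_card.1 (hint g he f hf hef).ge).mono inter_subset_left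
    · exact one_le_card.1 (hint e he g hg hge.symm).ge
  calc #H ≤ ∑ v ∈ e, #(edgesThrough H v) := card_le_sum_card_edgesThrough hmeet
    _ ≤ ∑ _v ∈ e, k := sum_le_sum fun v _ =>
        card_edgesThrough_le_of_not_isSunflower hunif hint hnsun v
    _ = k ^ 2 := by rw [sum_const, hunif e he, smul_eq_mul, sq]

/-- A 1-intersecting k-uniform hypergraph that is not a sunflower has at most k² edges. -/
theorem card_le_sq_of_one_intersecting_not_sunflower {V : Type*} [Fintype V] [DecidableEq V]
    (k : ℕ) (H : Finset (Finset V))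
    (hunif : ∀ e ∈ H, e.card = k)
    (hint : ∀ e ∈ H, ∀ f ∈ H, e ≠ f → (e ∩ f).card = 1)
    (hnsun : ¬ ∃ C : Finset V, ∀ e ∈ H, ∀ f ∈ H, e ≠ f → e ∩ f = C) :
    H.card ≤ k ^ 2 :=
  card_le_sq_of_one_intersecting_not_sunflower_general k H hunif hint hnsun
end

section
/- Let H be an intersecting k-uniform hypergraph with maximum degree at most Δ, and suppose H has a kernel A of size at most K. Then the number of non-isolated vertices of H is at most (1/4)k²Δ + K. -/
/-!
Let `e₀` be an edge whose trace `e₀ ∩ A` has the least size `ℓ`. Every edge meets this trace (the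
traces pairwise intersect), so there are at most `ℓΔ` edges, and each edge has at most `k - ℓ`
vertices outside `A`. Hence the order is at most `|A| + ℓ(k - ℓ)Δ ≤ |A| + k²Δ/4`.
-/

namespace Finset

variable {V : Type*} [DecidableEq V]

theorem card_le_card_mul_of_forall_inter_nonempty {H : Finset (Finset V)} {S : Finset V} {Δ : ℕ}
    (hS : ∀ e ∈ H, (e ∩ S).Nonempty) (hdeg : ∀ v, (H.filter (fun e => v ∈ e)).card ≤ Δ) :
    H.card ≤ S.card * Δ := by
  have hcover : H ⊆ S.biUnion (fun v => H.filter (fun e => v ∈ e)) := by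
    intro e he
    obtain ⟨v, hv⟩ := hS e he
    rw [mem_inter] at hv
    exact mem_biUnion.2 ⟨v, hv.2, mem_filter.2 ⟨he, hv.1⟩⟩
  calc H.card ≤ (S.biUnion (fun v => H.filter (fun e => v ∈ e))).card := card_le_card hcover
    _ ≤ ∑ v ∈ S, (H.filter (fun e => v ∈ e)).card := card_biUnion_le
    _ ≤ ∑ _v ∈ S, Δ := sum_le_sum fun v _ => hdeg v
    _ = S.card * Δ := by rw [sum_const, smul_eq_mul]

theorem card_biUnion_le_card_add_card_mul {H : Finset (Finset V)} (A : Finset V) {m : ℕ}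
    (hout : ∀ e ∈ H, (e \ A).card ≤ m) :
    (H.biUnion id).card ≤ A.card + H.card * m := by
  have hsplit : H.biUnion id ⊆ A ∪ H.biUnion (fun e => e \ A) := by
    intro v hv
    obtain ⟨e, he, hve⟩ := mem_biUnion.1 hv
    by_cases hvA : v ∈ A
    · exact mem_union_left _ hvA
    · exact mem_union_right _ (mem_biUnion.2 ⟨e, he, mem_sdiff.2 ⟨hve, hvA⟩⟩)
  calc (H.biUnion id).card ≤ (A ∪ H.biUnion (fun e => e \ A)).card := card_le_card hsplit
    _ ≤ A.card + (H.biUnion (fun e => e \ A)).card := card_union_le _ _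
    _ ≤ A.card + ∑ e ∈ H, (e \ A).card := by grw [card_biUnion_le]
    _ ≤ A.card + ∑ _e ∈ H, m := by grw [sum_le_sum hout]
    _ = A.card + H.card * m := by rw [sum_const, smul_eq_mul]

end Finset

theorem Nat.four_mul_mul_sub_le_sq (ℓ k : ℕ) : 4 * (ℓ * (k - ℓ)) ≤ k ^ 2 := by
  rcases le_or_gt ℓ k with hℓk | hkℓ
  · obtain ⟨m, rfl⟩ := Nat.exists_eq_add_of_le hℓk
    simpa [mul_assoc] using four_mul_le_sq_add ℓ m
  · simp [Nat.sub_eq_zero_of_le hkℓ.le]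

open Finset in
theorem order_le_of_intersecting_with_kernel_general {V : Type*} [DecidableEq V]
    (k Δ K : ℕ) (H : Finset (Finset V)) (A : Finset V)
    (hunif : ∀ e ∈ H, e.card = k)
    (hdeg : ∀ v : V, (H.filter (fun e => v ∈ e)).card ≤ Δ)
    (hker1 : ∀ e ∈ H, (e ∩ A).Nonempty)
    (hker2 : ∀ e ∈ H, ∀ f ∈ H, e ≠ f → ((e ∩ A) ∩ (f ∩ A)).Nonempty)
    (hK : A.card ≤ K) :
    ((H.biUnion id).card : ℝ) ≤ (1 / 4 : ℝ) * k ^ 2 * Δ + K := by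
  rcases H.eq_empty_or_nonempty with rfl | hH
  · simp only [biUnion_empty, card_empty, Nat.cast_zero]
    positivity
  obtain ⟨e₀, he₀, hmin⟩ := H.exists_min_image (fun e => (e ∩ A).card) hH
  set ℓ := (e₀ ∩ A).card
  have hmeet : ∀ f ∈ H, (f ∩ (e₀ ∩ A)).Nonempty := by
    intro f hf
    rcases eq_or_ne e₀ f with rfl | hne
    · simpa [inter_left_idem] using hker1 e₀ hf
    · simpa [inter_comm, inter_left_comm, inter_assoc] using hker2 e₀ he₀ f hf hne
  have hedges : H.card ≤ ℓ * Δ := card_le_card_mul_of_forall_inter_nonempty hmeet hdeg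
  have hout : ∀ e ∈ H, (e \ A).card ≤ k - ℓ := fun e he => by
    rw [card_sdiff, inter_comm, hunif e he]
    exact Nat.sub_le_sub_left (hmin e he) k
  have horder : 4 * (H.biUnion id).card ≤ k ^ 2 * Δ + 4 * K :=
    calc 4 * (H.biUnion id).card ≤ 4 * (A.card + H.card * (k - ℓ)) := by
          grw [card_biUnion_le_card_add_card_mul A hout]
      _ ≤ 4 * (K + ℓ * Δ * (k - ℓ)) := by grw [hedges, hK]
      _ = 4 * (ℓ * (k - ℓ)) * Δ + 4 * K := by ring
      _ ≤ k ^ 2 * Δ + 4 * K := by grw [Nat.four_mul_mul_sub_le_sq]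
  have horder_real : (4 * (H.biUnion id).card : ℝ) ≤ k ^ 2 * Δ + 4 * K := by exact_mod_cast horder
  linarith

/-- An intersecting k-uniform hypergraph with maximum degree at most Δ and
a kernel of size at most K has order at most (1/4)k²Δ + K. -/
theorem order_le_of_intersecting_with_kernel {V : Type*} [Fintype V] [DecidableEq V]
    (k Δ K : ℕ) (H : Finset (Finset V)) (A : Finset V)
    (hunif : ∀ e ∈ H, e.card = k)
    (hint : ∀ e ∈ H, ∀ f ∈ H, e ≠ f → (e ∩ f).Nonempty)
    (hdeg : ∀ v : V, (H.filter (fun e => v ∈ e)).card ≤ Δ)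
    (hker1 : ∀ e ∈ H, (e ∩ A).Nonempty)
    (hker2 : ∀ e ∈ H, ∀ f ∈ H, e ≠ f → ((e ∩ A) ∩ (f ∩ A)).Nonempty)
    (hK : A.card ≤ K) :
    ((H.biUnion id).card : ℝ) ≤ (1 / 4 : ℝ) * k ^ 2 * Δ + K :=
  order_le_of_intersecting_with_kernel_general k Δ K H A hunif hdeg hker1 hker2 hK
end

section
/- Let H be a λ-intersecting k-uniform hypergraph with m edges and let μ = k − λ. Then every vertex v of H satisfies (deg(v) − μ)(μ + λm) − λ·deg(v)² ≤ 0. -/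
/-! Let `D` be the set of edges through `v`, `d = #D`, and for a vertex `w` let `a w`, `b w` count
the edges of `D`, resp. `H`, containing `w`. Counting the incidences of pairs of edges gives
`∑ a² = d (μ + λd)`, `∑ a b = d (μ + λm)`, `∑ b² = m (μ + λm)`. With `A = μ + λm`, the vector
`t = A a - λd b` has `∑ t² = μA · d (A - λd)`, while `t v = d (A - λd)`; so `x = d (A - λd)`
satisfies `x² ≤ μA x`, whence `x ≤ μA`, which is the inequality. -/

open Finset

section

variable {V : Type*} [DecidableEq V] {k lam : ℕ} {S T : Finset (Finset V)}

theorem sum_card_inter_of_mem (hunif : ∀ e ∈ T, #e = k)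
    (hint : ∀ e ∈ T, ∀ f ∈ T, e ≠ f → #(e ∩ f) = lam) {f : Finset V} (hf : f ∈ T) :
    (∑ g ∈ T, #(f ∩ g) : ℤ) = k - lam + lam * #T := by
  have hrest : ∀ g ∈ T.erase f, (#(f ∩ g) : ℤ) = lam := fun g hg => by
    rw [hint f hf g (mem_of_mem_erase hg) (ne_of_mem_erase hg).symm]
  rw [← add_sum_erase _ _ hf, inter_self, hunif f hf, sum_congr rfl hrest, sum_const,
    card_erase_of_mem hf, nsmul_eq_mul, Nat.cast_pred (card_pos.mpr ⟨f, hf⟩)]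
  ring

theorem sum_sum_card_inter_of_subset (hunif : ∀ e ∈ T, #e = k)
    (hint : ∀ e ∈ T, ∀ f ∈ T, e ≠ f → #(e ∩ f) = lam) (hST : S ⊆ T) :
    (∑ f ∈ S, ∑ g ∈ T, #(f ∩ g) : ℤ) = #S * (k - lam + lam * #T) := by
  rw [sum_congr rfl fun f hf => sum_card_inter_of_mem hunif hint (hST hf), sum_const,
    nsmul_eq_mul]

theorem sum_card_filter_mem_mul [Fintype V] (S T : Finset (Finset V)) :
    ∑ w, #{e ∈ S | w ∈ e} * #{e ∈ T | w ∈ e} = ∑ f ∈ S, ∑ g ∈ T, #(f ∩ g) := by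
  rw [← sum_product']
  simp_rw [← card_product, ← filter_product]
  convert sum_card_bipartiteAbove_eq_sum_card_bipartiteBelow (s := univ) (t := S ×ˢ T)
    (fun w p => w ∈ p.1 ∧ w ∈ p.2) using 3
  all_goals ext; simp [bipartiteAbove, bipartiteBelow]

theorem sum_card_filter_mem_mul_of_subset [Fintype V] (hunif : ∀ e ∈ T, #e = k)
    (hint : ∀ e ∈ T, ∀ f ∈ T, e ≠ f → #(e ∩ f) = lam) (hST : S ⊆ T) :
    (∑ w, #{e ∈ S | w ∈ e} * #{e ∈ T | w ∈ e} : ℤ) = #S * (k - lam + lam * #T) := by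
  rw [← sum_sum_card_inter_of_subset hunif hint hST]
  exact_mod_cast sum_card_filter_mem_mul S T

end

theorem mccarthy_vanstone_of_gram {R ι : Type*} [CommRing R] [LinearOrder R]
    [IsStrictOrderedRing R] [Fintype ι] (a b : ι → R) (i : ι) {μ lam m d : R}
    (hμ : 0 ≤ μ) (hA : 0 ≤ μ + lam * m)
    (haa : ∑ j, a j * a j = d * (μ + lam * d))
    (hab : ∑ j, a j * b j = d * (μ + lam * m))
    (hbb : ∑ j, b j * b j = m * (μ + lam * m)) (hai : a i = d) (hbi : b i = d) :
    (d - μ) * (μ + lam * m) - lam * d ^ 2 ≤ 0 := by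
  set A := μ + lam * m
  set t : ι → R := fun j => A * a j - lam * d * b j
  have hsum : ∑ j, t j ^ 2 = μ * A * (d * (A - lam * d)) := by
    have hexpand : ∀ j, t j ^ 2 =
        A ^ 2 * (a j * a j) - 2 * A * (lam * d) * (a j * b j) + (lam * d) ^ 2 * (b j * b j) :=
      fun j => by ring
    rw [sum_congr rfl fun j _ => hexpand j, sum_add_distrib, sum_sub_distrib, ← mul_sum,
      ← mul_sum, ← mul_sum, haa, hab, hbb]
    ring
  have hti : t i = d * (A - lam * d) := by simp only [t, hai, hbi]; ring
  have hle : t i ^ 2 ≤ ∑ j, t j ^ 2 := single_le_sum (fun j _ => sq_nonneg (t j)) (mem_univ i)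
  rw [hsum, hti] at hle
  nlinarith [mul_nonneg hμ hA]

theorem mccarthy_vanstone_general {V : Type*} [Fintype V] [DecidableEq V]
    (k lam m : ℕ) (hlt : lam < k)
    (H : Finset (Finset V)) (hm : H.card = m)
    (hunif : ∀ e ∈ H, e.card = k)
    (hint : ∀ e ∈ H, ∀ f ∈ H, e ≠ f → (e ∩ f).card = lam) :
    ∀ v : V,
      (((H.filter (fun e => v ∈ e)).card : ℤ) - ((k : ℤ) - lam)) * (((k : ℤ) - lam) + lam * m)
        - lam * ((H.filter (fun e => v ∈ e)).card : ℤ) ^ 2 ≤ 0 := by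
  intro v
  set D := H.filter (fun e => v ∈ e)
  have hDH : D ⊆ H := filter_subset _ _
  have hDunif : ∀ e ∈ D, #e = k := fun e he => hunif e (hDH he)
  have hDint : ∀ e ∈ D, ∀ f ∈ D, e ≠ f → #(e ∩ f) = lam := fun e he f hf =>
    hint e (hDH he) f (hDH hf)
  have hDv : #{e ∈ D | v ∈ e} = #D :=
    congrArg _ (filter_true_of_mem fun e he => (mem_filter.mp he).2)
  have hμ : (0 : ℤ) ≤ k - lam := by omega
  subst hm
  exact mccarthy_vanstone_of_gram (fun w => (#{e ∈ D | w ∈ e} : ℤ))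
    (fun w => (#{e ∈ H | w ∈ e} : ℤ)) v hμ (add_nonneg hμ (by positivity))
    (sum_card_filter_mem_mul_of_subset hDunif hDint subset_rfl)
    (sum_card_filter_mem_mul_of_subset hunif hint hDH)
    (sum_card_filter_mem_mul_of_subset hunif hint subset_rfl) (congrArg Nat.cast hDv) rfl

/-- McCarthy–Vanstone inequality: in a λ-intersecting k-uniform hypergraph with m
edges, every vertex v satisfies (deg(v) − μ)(μ + λm) − λ·deg(v)² ≤ 0 where μ = k − λ. -/
theorem mccarthy_vanstone {V : Type*} [Fintype V] [DecidableEq V]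
    (k lam m : ℕ) (hlam : 1 ≤ lam) (hlt : lam < k)
    (H : Finset (Finset V)) (hm : H.card = m)
    (hunif : ∀ e ∈ H, e.card = k)
    (hint : ∀ e ∈ H, ∀ f ∈ H, e ≠ f → (e ∩ f).card = lam) :
    ∀ v : V,
      (((H.filter (fun e => v ∈ e)).card : ℤ) - ((k : ℤ) - lam)) * (((k : ℤ) - lam) + lam * m)
        - lam * ((H.filter (fun e => v ∈ e)).card : ℤ) ^ 2 ≤ 0 :=
  mccarthy_vanstone_general k lam m hlt H hm hunif hint
end

section
/- Let λ, k, m, μ be positive integers with μ = k − λ and m ≥ 20μ, and let d be a nonnegative integer satisfying (d − μ)(μ + λm) − λd² ≤ 0. Then either d ≤ 1.1μ or d ≥ m − 1.1μ. -/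
/-!
On the interval the quadratic splits as
`λ (d - 1.1μ)(m - 1.1μ - d) + μ (d - μ + λ (0.1m - 1.21μ))`:
the first summand is positive strictly between the two endpoints, and the second is nonnegative
there as soon as `m ≥ 20μ`, because then `0.1m ≥ 2μ > 1.21μ`.
-/

def mcCarthyVanstone (lam mu m d : ℝ) : ℝ :=
  (d - mu) * (mu + lam * m) - lam * d ^ 2

lemma mcCarthyVanstone_eq (lam mu m d : ℝ) :
    mcCarthyVanstone lam mu m d =
      lam * ((d - 1.1 * mu) * (m - 1.1 * mu - d)) +
        mu * (d - mu + lam * (0.1 * m - 1.21 * mu)) := by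
  unfold mcCarthyVanstone
  ring

lemma mcCarthyVanstone_pos {lam mu m d : ℝ} (hlam : 0 < lam) (hmu : 0 ≤ mu)
    (hm : 20 * mu ≤ m) (hd_low : 1.1 * mu < d) (hd_high : d < m - 1.1 * mu) :
    0 < mcCarthyVanstone lam mu m d := by
  have h_main : 0 < lam * ((d - 1.1 * mu) * (m - 1.1 * mu - d)) :=
    mul_pos hlam (mul_pos (by linarith) (by linarith))
  have h_rest : 0 ≤ mu * (d - mu + lam * (0.1 * m - 1.21 * mu)) :=
    mul_nonneg hmu (add_nonneg (by linarith) (mul_nonneg hlam.le (by linarith)))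
  rw [mcCarthyVanstone_eq]
  exact add_pos_of_pos_of_nonneg h_main h_rest

theorem degree_separation_general (lam m mu : ℕ) (hlam : 0 < lam)
    (hm20 : 20 * mu ≤ m) (d : ℕ)
    (hq : ((d : ℝ) - mu) * ((mu : ℝ) + lam * m) - (lam : ℝ) * (d : ℝ) ^ 2 ≤ 0) :
    (d : ℝ) ≤ 1.1 * mu ∨ (m : ℝ) - 1.1 * mu ≤ (d : ℝ) := by
  by_contra! h
  have hm20' : (20 : ℝ) * mu ≤ m := by exact_mod_cast hm20
  exact (mcCarthyVanstone_pos (by exact_mod_cast hlam) mu.cast_nonneg hm20' h.1 h.2).not_ge hq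

/-- Degree separation: if μ = k − λ, m ≥ 20μ and d satisfies the McCarthy–Vanstone
inequality, then d ≤ 1.1μ or d ≥ m − 1.1μ. -/
theorem degree_separation (lam k m mu : ℕ) (hlam : 0 < lam) (hk : 0 < k) (hm : 0 < m)
    (hlt : lam < k) (hmu : mu = k - lam) (hm20 : 20 * mu ≤ m) (d : ℕ)
    (hq : ((d : ℝ) - mu) * ((mu : ℝ) + lam * m) - (lam : ℝ) * (d : ℝ) ^ 2 ≤ 0) :
    (d : ℝ) ≤ 1.1 * mu ∨ (m : ℝ) - 1.1 * mu ≤ (d : ℝ) :=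
  degree_separation_general lam m mu hlam hm20 d hq
end

section
/- Let H be a λ-intersecting k-uniform hypergraph with m ≥ 20(k−λ) edges that is not a sunflower, and suppose every vertex has degree at most 1.1(k−λ) or at least m − 1.1(k−λ) (call the latter heavy vertices). If H has fewer than λ heavy vertices, then m ≤ 2(k−λ)². -/
open scoped Classical

open Finset

/-!
Fix an edge `e` and let `C` be the set of heavy vertices, so `|e ∩ C| < λ`. Every other edge meets
`e` in `λ` vertices, at least `t = λ - |e ∩ C| ≥ 1` of them light. Counting the incidences between
the light vertices of `e` and the other `m - 1` edges, each light vertex contributing at most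
`1.1(k - λ) - 1`, gives `(m - 1) t ≤ (k - λ + t)(1.1(k - λ) - 1)`, and since `t ≥ 1` this forces
`m ≤ 2(k - λ)²`.
-/

namespace Finset

variable {α : Type*} [DecidableEq α]

theorem card_inter_le_card_sdiff_inter_add_card_inter (e f C : Finset α) :
    #(e ∩ f) ≤ #(e \ C ∩ f) + #(e ∩ C) := by
  rw [← card_sdiff_add_card_inter (e ∩ f) C]
  gcongr <;> intro v <;> grind

theorem card_filter_mem_erase {H : Finset (Finset α)} {e : Finset α} {v : α} (he : e ∈ H)
    (hv : v ∈ e) : #{f ∈ H.erase e | v ∈ f} = #{f ∈ H | v ∈ f} - 1 := by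
  rw [filter_erase, card_erase_of_mem (mem_filter.2 ⟨he, hv⟩)]

theorem card_sub_one_mul_le_of_degree_le {H : Finset (Finset α)} {lam n : ℕ}
    (hint : ∀ e ∈ H, ∀ f ∈ H, e ≠ f → #(e ∩ f) = lam) {e : Finset α} (he : e ∈ H)
    (C : Finset α) (hdeg : ∀ v ∈ e \ C, #{f ∈ H | v ∈ f} ≤ n) :
    (#H - 1) * (lam - #(e ∩ C)) ≤ #(e \ C) * (n - 1) := by
  have hmeet : ∀ f ∈ H.erase e, lam - #(e ∩ C) ≤ #(e \ C ∩ f) := by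
    intro f hf
    have hlam := hint e he f (mem_of_mem_erase hf) (ne_of_mem_erase hf).symm
    have := card_inter_le_card_sdiff_inter_add_card_inter e f C
    omega
  have hdeg' : ∀ v ∈ e \ C, #{f ∈ H.erase e | v ∈ f} ≤ n - 1 := fun v hv => by
    rw [card_filter_mem_erase he (mem_sdiff.1 hv).1]
    exact Nat.sub_le_sub_right (hdeg v hv) 1
  calc (#H - 1) * (lam - #(e ∩ C)) = ∑ _f ∈ H.erase e, (lam - #(e ∩ C)) := by
        rw [sum_const, card_erase_of_mem he, smul_eq_mul]
    _ ≤ ∑ f ∈ H.erase e, #(e \ C ∩ f) := sum_le_sum hmeet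
    _ ≤ #(e \ C) * (n - 1) := sum_card_inter_le hdeg'

end Finset

theorem le_two_mul_sq_of_sub_one_mul_le {m d t n : ℕ} (hm : 1 ≤ m) (hd : 1 ≤ d) (ht : 1 ≤ t)
    (hn : 1 ≤ n) (hnd : (n : ℝ) ≤ 1.1 * d) (h : (m - 1) * t ≤ (d + t) * (n - 1)) :
    m ≤ 2 * d ^ 2 := by
  have hR := (Nat.cast_le (α := ℝ)).2 h
  push_cast [Nat.cast_sub hm, Nat.cast_sub hn] at hR
  have hd : (1 : ℝ) ≤ d := by exact_mod_cast hd
  have ht : (1 : ℝ) ≤ t := by exact_mod_cast ht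
  have hn : (1 : ℝ) ≤ n := by exact_mod_cast hn
  have hdt : ((d : ℝ) + t) * (n - 1) ≤ t * (d + 1) * (n - 1) := by gcongr; nlinarith
  have hm' : (m : ℝ) - 1 ≤ (d + 1) * (n - 1) := by nlinarith
  exact_mod_cast (by nlinarith : (m : ℝ) ≤ 2 * d ^ 2)

theorem few_heavy_vertices_general {V : Type*} [Fintype V] [DecidableEq V]
    (k lam m : ℕ) (hlt : lam < k)
    (H : Finset (Finset V)) (hm : H.card = m)
    (hunif : ∀ e ∈ H, e.card = k)
    (hint : ∀ e ∈ H, ∀ f ∈ H, e ≠ f → (e ∩ f).card = lam)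
    (hsep : ∀ v : V,
      ((H.filter (fun e => v ∈ e)).card : ℝ) ≤ 1.1 * ((k : ℝ) - lam) ∨
      (m : ℝ) - 1.1 * ((k : ℝ) - lam) ≤ ((H.filter (fun e => v ∈ e)).card : ℝ))
    (hheavy : (Finset.univ.filter (fun v : V =>
      (m : ℝ) - 1.1 * ((k : ℝ) - lam) ≤ ((H.filter (fun e => v ∈ e)).card : ℝ))).card < lam) :
    m ≤ 2 * (k - lam) ^ 2 := by
  obtain rfl | ⟨e, he⟩ := H.eq_empty_or_nonempty
  · simp [← hm]
  set C := univ.filter fun v : V =>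
    (m : ℝ) - 1.1 * ((k : ℝ) - lam) ≤ ((H.filter (fun e => v ∈ e)).card : ℝ)
  set n := ⌊1.1 * ((k : ℝ) - lam)⌋₊
  have hlight : ∀ v ∈ e \ C, #{f ∈ H | v ∈ f} ≤ n := fun v hv =>
    Nat.le_floor <| (hsep v).resolve_right fun hv_heavy =>
      (mem_sdiff.1 hv).2 (mem_filter.2 ⟨mem_univ v, hv_heavy⟩)
  have hcount := card_sub_one_mul_le_of_degree_le hint he C hlight
  have hinter : #(e ∩ C) < lam := (card_le_card inter_subset_right).trans_lt hheavy
  have hsplit : #(e \ C) + #(e ∩ C) = k := by rw [card_sdiff_add_card_inter, hunif e he]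
  have hD : (1 : ℝ) ≤ k - lam := by
    have : (lam : ℝ) + 1 ≤ k := by exact_mod_cast hlt
    linarith
  have hn : 1 ≤ n := Nat.le_floor (by push_cast; linarith)
  have hnd : (n : ℝ) ≤ 1.1 * (k - lam : ℕ) := by
    rw [Nat.cast_sub hlt.le]; exact Nat.floor_le (by linarith)
  refine le_two_mul_sq_of_sub_one_mul_le (hm ▸ card_pos.2 ⟨e, he⟩) (by omega)
    (t := lam - #(e ∩ C)) (by omega) hn hnd ?_
  rw [← hm]
  convert hcount using 2
  omega

/-- A non-sunflower λ-intersecting k-graph with m ≥ 20(k−λ) edges, whose degrees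
separate into light and heavy, with fewer than λ heavy vertices, has m ≤ 2(k−λ)². -/
theorem few_heavy_vertices {V : Type*} [Fintype V] [DecidableEq V]
    (k lam m : ℕ) (hlam : 1 ≤ lam) (hlt : lam < k)
    (H : Finset (Finset V)) (hm : H.card = m) (hm20 : 20 * (k - lam) ≤ m)
    (hunif : ∀ e ∈ H, e.card = k)
    (hint : ∀ e ∈ H, ∀ f ∈ H, e ≠ f → (e ∩ f).card = lam)
    (hnsun : ¬ ∃ C : Finset V, ∀ e ∈ H, ∀ f ∈ H, e ≠ f → e ∩ f = C)
    (hsep : ∀ v : V,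
      ((H.filter (fun e => v ∈ e)).card : ℝ) ≤ 1.1 * ((k : ℝ) - lam) ∨
      (m : ℝ) - 1.1 * ((k : ℝ) - lam) ≤ ((H.filter (fun e => v ∈ e)).card : ℝ))
    (hheavy : (Finset.univ.filter (fun v : V =>
      (m : ℝ) - 1.1 * ((k : ℝ) - lam) ≤ ((H.filter (fun e => v ∈ e)).card : ℝ))).card < lam) :
    m ≤ 2 * (k - lam) ^ 2 :=
  few_heavy_vertices_general k lam m hlt H hm hunif hint hsep hheavy
end

section
/- Let H be a λ-intersecting k-uniform hypergraph with m ≥ 20(k−λ) edges that is not a sunflower, and suppose every vertex has degree at most 1.1(k−λ) or at least m − 1.1(k−λ). If H has at least λ vertices of degree at least m − 1.1(k−λ), then m ≤ 3λ(k−λ). -/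
open scoped Classical

/-- A non-sunflower λ-intersecting k-graph with m ≥ 20(k−λ) edges, whose degrees
separate into light and heavy, with at least λ heavy vertices, has m ≤ 3λ(k−λ). -/
theorem many_heavy_vertices {V : Type*} [Fintype V] [DecidableEq V]
    (k lam m : ℕ) (hlam : 1 ≤ lam) (hlt : lam < k)
    (H : Finset (Finset V)) (hm : H.card = m) (hm20 : 20 * (k - lam) ≤ m)
    (hunif : ∀ e ∈ H, e.card = k)
    (hint : ∀ e ∈ H, ∀ f ∈ H, e ≠ f → (e ∩ f).card = lam)
    (hnsun : ¬ ∃ C : Finset V, ∀ e ∈ H, ∀ f ∈ H, e ≠ f → e ∩ f = C)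
    (hsep : ∀ v : V,
      ((H.filter (fun e => v ∈ e)).card : ℝ) ≤ 1.1 * ((k : ℝ) - lam) ∨
      (m : ℝ) - 1.1 * ((k : ℝ) - lam) ≤ ((H.filter (fun e => v ∈ e)).card : ℝ))
    (hheavy : lam ≤ (Finset.univ.filter (fun v : V =>
      (m : ℝ) - 1.1 * ((k : ℝ) - lam) ≤ ((H.filter (fun e => v ∈ e)).card : ℝ))).card) :
    m ≤ 3 * lam * (k - lam) := by
  by_contra hcon
  push_neg at hcon
  -- real casts
  have hkx : ((k : ℝ) - lam) = ((k - lam : ℕ) : ℝ) := by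
    rw [Nat.cast_sub hlt.le]
  have hL1 : (1 : ℝ) ≤ (lam : ℝ) := by exact_mod_cast hlam
  have hX1 : (1 : ℝ) ≤ ((k : ℝ) - lam) := by
    rw [hkx]; exact_mod_cast Nat.one_le_iff_ne_zero.2 (Nat.sub_ne_zero_of_lt hlt)
  have hconR : 3 * (lam : ℝ) * ((k : ℝ) - lam) + 1 ≤ (m : ℝ) := by
    rw [hkx]
    have : 3 * lam * (k - lam) + 1 ≤ m := hcon
    exact_mod_cast this
  -- pick λ heavy vertices
  obtain ⟨T, hTS, hTcard⟩ := Finset.exists_subset_card_eq hheavy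
  -- each heavy vertex misses few edges
  have hmiss : ∀ v ∈ T, ((H.filter (fun e => v ∉ e)).card : ℝ) ≤ 1.1 * ((k : ℝ) - lam) := by
    intro v hv
    have hvS := hTS hv
    rw [Finset.mem_filter] at hvS
    have hsplit : (H.filter (fun e => v ∈ e)).card + (H.filter (fun e => ¬ v ∈ e)).card = m := by
      rw [Finset.card_filter_add_card_filter_not, hm]
    have : ((H.filter (fun e => v ∈ e)).card : ℝ) + ((H.filter (fun e => ¬ v ∈ e)).card : ℝ) = m := by
      exact_mod_cast hsplit
    have hvh := hvS.2
    linarith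
  -- edges containing T
  set A := H.filter (fun e => T ⊆ e) with hA
  have hAcard : (m : ℝ) - (lam : ℝ) * (1.1 * ((k : ℝ) - lam)) ≤ (A.card : ℝ) := by
    have hsplit : A.card + (H.filter (fun e => ¬ T ⊆ e)).card = m := by
      rw [hA, Finset.card_filter_add_card_filter_not, hm]
    have hsubB : H.filter (fun e => ¬ T ⊆ e) ⊆ T.biUnion (fun v => H.filter (fun e => v ∉ e)) := by
      intro e he
      rw [Finset.mem_filter] at he
      obtain ⟨v, hvT, hve⟩ := Finset.not_subset.1 he.2
      exact Finset.mem_biUnion.2 ⟨v, hvT, Finset.mem_filter.2 ⟨he.1, hve⟩⟩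
    have hB : ((H.filter (fun e => ¬ T ⊆ e)).card : ℝ) ≤ (lam : ℝ) * (1.1 * ((k : ℝ) - lam)) := by
      calc ((H.filter (fun e => ¬ T ⊆ e)).card : ℝ)
          ≤ ((T.biUnion (fun v => H.filter (fun e => v ∉ e))).card : ℝ) := by
            exact_mod_cast Finset.card_le_card hsubB
        _ ≤ (∑ v ∈ T, (H.filter (fun e => v ∉ e)).card : ℕ) := by
            exact_mod_cast Finset.card_biUnion_le
        _ = ∑ v ∈ T, ((H.filter (fun e => v ∉ e)).card : ℝ) := by push_cast; rfl
        _ ≤ ∑ v ∈ T, (1.1 * ((k : ℝ) - lam)) := Finset.sum_le_sum hmiss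
        _ = (lam : ℝ) * (1.1 * ((k : ℝ) - lam)) := by
            rw [Finset.sum_const, hTcard, nsmul_eq_mul]
    have : (A.card : ℝ) + ((H.filter (fun e => ¬ T ⊆ e)).card : ℝ) = m := by exact_mod_cast hsplit
    linarith
  -- every edge contains T
  have hTsub : ∀ e ∈ H, T ⊆ e := by
    by_contra hc
    push_neg at hc
    obtain ⟨e, heH, heT⟩ := hc
    obtain ⟨v, hvT, hve⟩ := Finset.not_subset.1 heT
    have hg : ∀ f ∈ A, ∃ w, w ∈ e ∧ w ∉ T ∧ w ∈ f := by
      intro f hf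
      rw [hA, Finset.mem_filter] at hf
      obtain ⟨hfH, hTf⟩ := hf
      have hef : e ≠ f := fun h => heT (h ▸ hTf)
      have hcard : (e ∩ f).card = lam := hint e heH f hfH hef
      have hnot : ¬ (e ∩ f ⊆ T) := by
        intro hsub
        have hsub2 : e ∩ f ⊆ T.erase v := by
          intro w hw
          exact Finset.mem_erase.2
            ⟨fun h => hve (h ▸ (Finset.mem_inter.1 hw).1), hsub hw⟩
        have := Finset.card_le_card hsub2
        rw [hcard, Finset.card_erase_of_mem hvT, hTcard] at this
        omega
      obtain ⟨w, hw1, hw2⟩ := Finset.not_subset.1 hnot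
      exact ⟨w, (Finset.mem_inter.1 hw1).1, hw2, (Finset.mem_inter.1 hw1).2⟩
    choose g hg1 hg2 hg3 using hg
    have hcardA : A.card ≤ (e.filter (fun w => w ∉ T)).card := by
      apply Finset.card_le_card_of_injOn (fun f => if h : f ∈ A then g f h else v)
      · intro f hf
        simp only [dif_pos (Finset.mem_coe.1 hf)]
        exact Finset.mem_filter.2 ⟨hg1 f hf, hg2 f hf⟩
      · intro f hf f' hf' heq
        simp only [Finset.mem_coe] at hf hf'
        simp only [hf, hf', dif_pos] at heq
        by_contra hne
        rw [hA, Finset.mem_filter] at hf hf'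
        have hTff' : T = f ∩ f' := by
          apply Finset.eq_of_subset_of_card_le
          · exact Finset.subset_inter hf.2 hf'.2
          · rw [hint f hf.1 f' hf'.1 hne, hTcard]
        have hwff' : g f (by rw [hA, Finset.mem_filter]; exact hf) ∈ f ∩ f' := by
          refine Finset.mem_inter.2 ⟨hg3 f _, ?_⟩
          rw [heq]; exact hg3 f' _
        rw [← hTff'] at hwff'
        exact hg2 f _ hwff'
    have hk : (A.card : ℝ) ≤ (k : ℝ) := by
      have h1 : (e.filter (fun w => w ∉ T)).card ≤ e.card := Finset.card_le_card (Finset.filter_subset _ _)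
      have : A.card ≤ k := by rw [← hunif e heH]; exact le_trans hcardA h1
      exact_mod_cast this
    nlinarith [mul_nonneg (sub_nonneg.2 hL1) (sub_nonneg.2 hX1)]
  -- hence H is a sunflower with core T
  apply hnsun
  refine ⟨T, fun e he f hf hef => ?_⟩
  apply (Finset.eq_of_subset_of_card_le (Finset.subset_inter (hTsub e he) (hTsub f hf)) ?_).symm
  rw [hint e he f hf hef, hTcard]
end

section
/- Let T be a tree with t edges e₁, …, e_t, and for each i let V_i be the set of vertices of T at odd distance from e_i (a vertex v has odd distance from an edge e if the minimum over endpoints u of e of the graph distance d(v,u) is odd). Then Σ_{i=1}^{t} |V_i| ≥ ⌊t²/2⌋. -/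
/-- The distance from a vertex `v` to an edge `e` (an unordered pair): the minimum
of the distances from `v` to the two endpoints of `e`. -/
noncomputable def edgeDist {V : Type*} (G : SimpleGraph V) (v : V) (e : Sym2 V) : ℕ :=
  Sym2.lift ⟨fun x y => min (G.dist v x) (G.dist v y), fun x y => min_comm _ _⟩ e

open scoped Classical

section Aux

open SimpleGraph

set_option linter.unusedSectionVars false

variable {V : Type*} [DecidableEq V] {G : SimpleGraph V}

@[simp] lemma edgeDist_mk' (v x y : V) :
    edgeDist G v s(x, y) = min (G.dist v x) (G.dist v y) := rfl

/-- In a tree, every path realizes the distance. -/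
lemma tree_path_length (hT : G.IsTree) {u v : V} {p : G.Walk u v} (hp : p.IsPath) :
    p.length = G.dist u v := by
  obtain ⟨q, hq, hql⟩ := hT.isConnected.exists_path_of_dist u v
  have := (hT.existsUnique_path u v).unique hp hq
  rw [this, hql]

/-- Distances to adjacent vertices differ by exactly one. -/
lemma tree_adj_dist (hT : G.IsTree) {x y : V} (h : G.Adj x y) (v : V) :
    G.dist v y = G.dist v x + 1 ∨ G.dist v x = G.dist v y + 1 := by
  obtain ⟨p, hp, hpl⟩ := hT.isConnected.exists_path_of_dist v x
  by_cases hy : y ∈ p.support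
  · right
    have h1 : (p.takeUntil y hy).length = G.dist v y := tree_path_length hT (hp.takeUntil hy)
    have h2 : (p.dropUntil y hy).length = G.dist y x := tree_path_length hT (hp.dropUntil hy)
    have h3 : G.dist y x = 1 := dist_eq_one_iff_adj.2 h.symm
    have h4 := p.take_spec hy
    have h5 : p.length = (p.takeUntil y hy).length + (p.dropUntil y hy).length := by
      conv_lhs => rw [← h4]
      exact SimpleGraph.Walk.length_append _ _
    omega
  · left
    have hq : (p.concat h).IsPath := by
      rw [SimpleGraph.Walk.isPath_def, SimpleGraph.Walk.support_concat,
        List.nodup_append']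
      refine ⟨hp.support_nodup, List.nodup_singleton y, ?_⟩
      intro a ha hb
      simp at hb
      exact hy (hb ▸ ha)
    have := tree_path_length hT hq
    rw [SimpleGraph.Walk.length_concat, hpl] at this
    omega

/-- Walk parity: colors alternate along any walk. -/
lemma tree_walk_parity (hT : G.IsTree) (r : V) {a b : V} (p : G.Walk a b) :
    (G.dist r a + p.length) % 2 = G.dist r b % 2 := by
  induction p with
  | nil => simp
  | @cons a c b hadj q ih =>
    have := tree_adj_dist hT hadj r
    rw [SimpleGraph.Walk.length_cons]
    omega

/-- Parity of distance in terms of distances to a root. -/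
lemma tree_dist_parity (hT : G.IsTree) (r : V) (a b : V) :
    (G.dist r a + G.dist a b) % 2 = G.dist r b % 2 := by
  obtain ⟨p, _, hpl⟩ := hT.isConnected.exists_path_of_dist a b
  have := tree_walk_parity hT r p
  rwa [hpl] at this

/-- Unique predecessor towards `v`. -/
lemma tree_unique_pred (hT : G.IsTree) {v u x₁ x₂ : V} (h₁ : G.Adj x₁ u) (h₂ : G.Adj x₂ u)
    (d₁ : G.dist v u = G.dist v x₁ + 1) (d₂ : G.dist v u = G.dist v x₂ + 1) : x₁ = x₂ := by
  have key : ∀ {x : V} (h : G.Adj x u), G.dist v u = G.dist v x + 1 →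
      ∃ (p : G.Walk v x), (p.concat h).IsPath := by
    intro x h hd
    obtain ⟨p, hp, hpl⟩ := hT.isConnected.exists_path_of_dist v x
    have hu : u ∉ p.support := by
      intro hu
      have h5 : G.dist v u ≤ (p.takeUntil u hu).length := by
        rw [tree_path_length hT (hp.takeUntil hu)]
      have := p.length_takeUntil_le hu
      omega
    refine ⟨p, ?_⟩
    rw [SimpleGraph.Walk.isPath_def, SimpleGraph.Walk.support_concat,
      List.nodup_append']
    refine ⟨hp.support_nodup, List.nodup_singleton u, ?_⟩
    intro a ha hb
    simp at hb
    exact hu (hb ▸ ha)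
  obtain ⟨p₁, hp₁⟩ := key h₁ d₁
  obtain ⟨p₂, hp₂⟩ := key h₂ d₂
  have heq := (hT.existsUnique_path v u).unique hp₁ hp₂
  obtain ⟨hv, -⟩ := SimpleGraph.Walk.concat_inj heq
  exact hv

lemma far_spec (hT : G.IsTree) {v : V} {e : Sym2 V} (he : e ∈ G.edgeSet) :
    ∃ u, u ∈ e ∧ G.dist v u = edgeDist G v e + 1 := by
  induction e with
  | _ x y =>
    rw [SimpleGraph.mem_edgeSet] at he
    rcases tree_adj_dist hT he v with h | h
    · exact ⟨y, Sym2.mem_mk_right x y,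
        by simp only [edgeDist_mk', min_def]; split_ifs <;> omega⟩
    · exact ⟨x, Sym2.mem_mk_left x y,
        by simp only [edgeDist_mk', min_def]; split_ifs <;> omega⟩

lemma tree_count_v [Fintype V] (hT : G.IsTree) (v : V) [Fintype G.edgeSet]
    [DecidableRel G.Adj] :
    (G.edgeFinset.filter fun e => Odd (edgeDist G v e)).card
      = (Finset.univ.filter fun u => u ≠ v ∧ Even (G.dist v u)).card := by
  classical
  have hmem : ∀ e ∈ G.edgeFinset.filter fun e => Odd (edgeDist G v e), e ∈ G.edgeSet := by
    intro e he
    exact SimpleGraph.mem_edgeFinset.1 (Finset.mem_filter.1 he).1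
  apply Finset.card_bij
    (i := fun e he => Classical.choose (far_spec (v := v) hT (hmem e he)))
  · -- maps into target
    intro e he
    obtain ⟨hu1, hu2⟩ := Classical.choose_spec (far_spec (v := v) hT (hmem e he))
    have ho : Odd (edgeDist G v e) := (Finset.mem_filter.1 he).2
    rw [Finset.mem_filter]
    refine ⟨Finset.mem_univ _, ?_, ?_⟩
    · intro h
      rw [h] at hu2
      have hz : G.dist v v = 0 := SimpleGraph.dist_self
      omega
    · rw [hu2]
      rcases ho with ⟨k, hk⟩
      exact ⟨k + 1, by omega⟩
  · -- injective
    intro e₁ he₁ e₂ he₂ heq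
    obtain ⟨hu1, hd1⟩ := Classical.choose_spec (far_spec (v := v) hT (hmem e₁ he₁))
    obtain ⟨hu2, hd2⟩ := Classical.choose_spec (far_spec (v := v) hT (hmem e₂ he₂))
    set u := Classical.choose (far_spec (v := v) hT (hmem e₁ he₁)) with hudef
    rw [← heq] at hu2 hd2
    obtain ⟨x₁, hx₁⟩ := Sym2.mem_iff_exists.1 hu1
    obtain ⟨x₂, hx₂⟩ := Sym2.mem_iff_exists.1 hu2
    have ha₁ : G.Adj u x₁ := by
      have h' := hmem e₁ he₁; rw [hx₁, SimpleGraph.mem_edgeSet] at h'; exact h'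
    have ha₂ : G.Adj u x₂ := by
      have h' := hmem e₂ he₂; rw [hx₂, SimpleGraph.mem_edgeSet] at h'; exact h'
    have hm₁ : edgeDist G v e₁ = min (G.dist v u) (G.dist v x₁) := by rw [hx₁]; rfl
    have hm₂ : edgeDist G v e₂ = min (G.dist v u) (G.dist v x₂) := by rw [hx₂]; rfl
    have hdx₁ : G.dist v u = G.dist v x₁ + 1 := by
      rw [hm₁, min_def] at hd1; split_ifs at hd1 <;> omega
    have hdx₂ : G.dist v u = G.dist v x₂ + 1 := by
      rw [hm₂, min_def] at hd2; split_ifs at hd2 <;> omega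
    have := tree_unique_pred hT ha₁.symm ha₂.symm hdx₁ hdx₂
    rw [hx₁, hx₂, this]
  · -- surjective
    intro u hu
    obtain ⟨-, hne, heven⟩ := Finset.mem_filter.1 hu
    have hpos : 0 < G.dist v u := hT.isConnected.pos_dist_of_ne (fun h => hne h.symm)
    have h2 : 2 ≤ G.dist v u := by
      rcases heven with ⟨k, hk⟩; omega
    obtain ⟨p, hp, hpl⟩ := hT.isConnected.exists_path_of_dist v u
    cases hq : p.reverse with
    | nil => exact absurd rfl hne
    | @cons _ c _ h q =>
      have hlen : p.length = q.length + 1 := by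
        have := congrArg SimpleGraph.Walk.length hq
        simpa using this
      have hdc : G.dist v c = G.dist v u - 1 := by
        have hle : G.dist v c ≤ q.length := by
          have := G.dist_le q.reverse
          simpa using this
        have htri : G.dist v u ≤ G.dist v c + G.dist c u :=
          hT.isConnected.dist_triangle
        have : G.dist c u = 1 := dist_eq_one_iff_adj.2 h.symm
        omega
      have hadj : G.Adj c u := h.symm
      have heF : s(c, u) ∈ G.edgeFinset := SimpleGraph.mem_edgeFinset.2 hadj
      have hed : edgeDist G v s(c, u) = G.dist v u - 1 := by
        simp only [edgeDist_mk', hdc, min_def]; split_ifs <;> omega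
      have hodd : Odd (edgeDist G v s(c, u)) := by
        rw [hed]; rcases heven with ⟨k, hk⟩; exact ⟨k - 1, by omega⟩
      have hmemf : s(c, u) ∈ G.edgeFinset.filter fun e => Odd (edgeDist G v e) :=
        Finset.mem_filter.2 ⟨heF, hodd⟩
      refine ⟨s(c, u), hmemf, ?_⟩
      obtain ⟨hw1, hw2⟩ := Classical.choose_spec (far_spec (v := v) hT (hmem _ hmemf))
      set w := Classical.choose (far_spec (v := v) hT (hmem _ hmemf)) with hwdef
      rw [hed] at hw2
      rcases Sym2.mem_iff.1 hw1 with h' | h'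
      · rw [h'] at hw2; omega
      · exact h'

end Aux

/-- In a tree with t edges, the sum over edges e of the number of vertices at odd
distance from e is at least ⌊t²/2⌋. -/
theorem sum_odd_distance_sets {V : Type*} [Fintype V] [DecidableEq V]
    (G : SimpleGraph V) [DecidableRel G.Adj] (hT : G.IsTree)
    (t : ℕ) (ht : G.edgeFinset.card = t) (ht1 : 1 ≤ t) :
    t ^ 2 / 2 ≤
      ∑ e ∈ G.edgeFinset, (Finset.univ.filter (fun v => Odd (edgeDist G v e))).card := by
  classical
  obtain ⟨r⟩ := hT.isConnected.nonempty
  have hswap : ∑ e ∈ G.edgeFinset, (Finset.univ.filter (fun v => Odd (edgeDist G v e))).card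
      = ∑ v : V, (G.edgeFinset.filter (fun e => Odd (edgeDist G v e))).card := by
    simp only [Finset.card_filter]
    rw [Finset.sum_comm]
  rw [hswap]
  have hcount : ∀ v : V, (G.edgeFinset.filter (fun e => Odd (edgeDist G v e))).card
      = (Finset.univ.filter fun u => u ≠ v ∧ Even (G.dist v u)).card :=
    fun v => tree_count_v hT v
  set B := Finset.univ.filter (fun u : V => G.dist r u % 2 = 0) with hB
  set W := Finset.univ.filter (fun u : V => G.dist r u % 2 = 1) with hW
  set b := B.card with hb
  set w := W.card with hw
  have hWeq : W = Finset.univ.filter (fun u : V => ¬ (G.dist r u % 2 = 0)) := by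
    rw [hW]; ext u; simp only [Finset.mem_filter, Finset.mem_univ, true_and]; omega
  have hBW : b + w = Fintype.card V := by
    rw [hb, hw, hWeq, hB]
    exact Finset.card_filter_add_card_filter_not _
  have hn : Fintype.card V = t + 1 := by
    have := hT.card_edgeFinset
    omega
  have hclass : ∀ v : V, (Finset.univ.filter fun u => u ≠ v ∧ Even (G.dist v u))
      = (Finset.univ.filter fun u => G.dist r u % 2 = G.dist r v % 2).erase v := by
    intro v
    ext u
    simp only [Finset.mem_filter, Finset.mem_erase, Finset.mem_univ, true_and]
    have hpar := tree_dist_parity hT r v u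
    exact and_congr Iff.rfl (by rw [Nat.even_iff]; omega)
  have hcardv : ∀ v : V, (G.edgeFinset.filter (fun e => Odd (edgeDist G v e))).card
      = (if G.dist r v % 2 = 0 then b else w) - 1 := by
    intro v
    rw [hcount v, hclass v]
    have hvm : v ∈ Finset.univ.filter fun u => G.dist r u % 2 = G.dist r v % 2 := by simp
    rw [Finset.card_erase_of_mem hvm]
    congr 1
    by_cases hv : G.dist r v % 2 = 0
    · rw [if_pos hv, hb, hB]
      congr 1
      ext u; simp [hv]
    · rw [if_neg hv, hw, hW]
      congr 1
      ext u
      simp only [Finset.mem_filter, Finset.mem_univ, true_and]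
      omega
  rw [Finset.sum_congr rfl (fun v _ => hcardv v)]
  have hsplit : ∑ v : V, ((if G.dist r v % 2 = 0 then b else w) - 1)
      = b * (b - 1) + w * (w - 1) := by
    have e1 : ∀ v ∈ Finset.univ.filter (fun v : V => G.dist r v % 2 = 0),
        (if G.dist r v % 2 = 0 then b else w) - 1 = b - 1 := fun v hv => by
      rw [if_pos (Finset.mem_filter.1 hv).2]
    have e2 : ∀ v ∈ Finset.univ.filter (fun v : V => ¬ G.dist r v % 2 = 0),
        (if G.dist r v % 2 = 0 then b else w) - 1 = w - 1 := fun v hv => by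
      rw [if_neg (Finset.mem_filter.1 hv).2]
    rw [← Finset.sum_filter_add_sum_filter_not Finset.univ
        (fun v : V => G.dist r v % 2 = 0),
      Finset.sum_congr rfl e1, Finset.sum_congr rfl e2, Finset.sum_const,
      Finset.sum_const, smul_eq_mul, smul_eq_mul, ← hB, ← hWeq, ← hb, ← hw]
  rw [hsplit]
  -- b ≥ 1 and w ≥ 1
  have hb1 : 1 ≤ b := by
    rw [hb]
    refine Finset.card_pos.2 ⟨r, ?_⟩
    simp [hB, SimpleGraph.dist_self]
  have hw1 : 1 ≤ w := by
    have hE : G.edgeFinset.Nonempty := by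
      rw [← Finset.card_pos, ht]; omega
    obtain ⟨e, he⟩ := hE
    have he' : e ∈ G.edgeSet := SimpleGraph.mem_edgeFinset.1 he
    rw [hw]
    refine Finset.card_pos.2 ?_
    induction e with
    | _ x y =>
      rw [SimpleGraph.mem_edgeSet] at he'
      rcases tree_adj_dist hT he' r with h | h
      · exact ⟨if G.dist r x % 2 = 0 then y else x, by
          by_cases hx : G.dist r x % 2 = 0 <;> simp [hW, hx] <;> omega⟩
      · exact ⟨if G.dist r y % 2 = 0 then x else y, by
          by_cases hy : G.dist r y % 2 = 0 <;> simp [hW, hy] <;> omega⟩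
  have key : t ^ 2 ≤ 2 * (b * (b - 1) + w * (w - 1)) + 1 := by
    have hbw : b + w = t + 1 := by omega
    zify [hb1, hw1]
    nlinarith [sq_nonneg ((b : ℤ) - w), hbw]
  omega
end

section
/- Let T be a tree whose two bipartition classes have sizes b and w, with edges e₁, …, e_t (so t = b + w − 1), and for each i let V_i be the set of vertices at odd distance from e_i. Then Σ_{i=1}^{t} |V_i| = b(b−1) + w(w−1). -/
open scoped Classical

section Aux

variable {V : Type*} {G : SimpleGraph V}

/-- Along any walk in a properly 2-colored graph, the endpoints have the same color
iff the length is even. -/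
lemma walk_color_parity (c : V → Bool) (hc : ∀ u v : V, G.Adj u v → c u ≠ c v) :
    ∀ {u x : V} (p : G.Walk u x), (c u = c x ↔ Even p.length) := by
  intro u x p
  induction p with
  | nil => simp
  | @cons u y x h p ih =>
    have hne := hc _ _ h
    simp only [SimpleGraph.Walk.length_cons, Nat.even_add_one, ← ih]
    cases hcu : c u <;> cases hcy : c y <;> cases hcx : c x <;> simp_all

lemma dist_color_parity (c : V → Bool) (hc : ∀ u v : V, G.Adj u v → c u ≠ c v)
    (hconn : G.Connected) (u x : V) : c u = c x ↔ Even (G.dist u x) := by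
  obtain ⟨p, hp⟩ := hconn.exists_walk_length_eq_dist u x
  rw [← hp]
  exact walk_color_parity c hc p

lemma exists_closer_neighbor (hconn : G.Connected) {v u : V} (h : u ≠ v) :
    ∃ y, G.Adj u y ∧ G.dist v y < G.dist v u := by
  have hd : 0 < G.dist u v := hconn.pos_dist_of_ne h
  obtain ⟨p, hp⟩ := hconn.exists_walk_length_eq_dist u v
  cases p with
  | nil => exact absurd rfl h
  | @cons _ y _ hadj q =>
    refine ⟨y, hadj, ?_⟩
    have h1 : G.dist v y ≤ q.length := by
      rw [SimpleGraph.dist_comm]; exact SimpleGraph.dist_le q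
    have h2 : q.length + 1 = G.dist u v := by simpa using hp
    have h3 : G.dist v u = G.dist u v := SimpleGraph.dist_comm
    omega

end Aux

/-- In a tree with bipartition classes of sizes b and w, the sum over edges e of the
number of vertices at odd distance from e equals b(b−1) + w(w−1). -/
theorem sum_odd_distance_sets_eq {V : Type*} [Fintype V] [DecidableEq V]
    (G : SimpleGraph V) [DecidableRel G.Adj] (hT : G.IsTree)
    (c : V → Bool) (hc : ∀ u v : V, G.Adj u v → c u ≠ c v)
    (b w : ℕ) (hb : (Finset.univ.filter (fun v => c v = true)).card = b)
    (hw : (Finset.univ.filter (fun v => c v = false)).card = w) :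
    ∑ e ∈ G.edgeFinset, (Finset.univ.filter (fun v => Odd (edgeDist G v e))).card
      = b * (b - 1) + w * (w - 1) := by
  classical
  have hconn : G.Connected := hT.isConnected
  -- swap the double count
  have hswap :
      ∑ e ∈ G.edgeFinset, (Finset.univ.filter (fun v => Odd (edgeDist G v e))).card
        = ∑ v : V, (G.edgeFinset.filter (fun e => Odd (edgeDist G v e))).card := by
    simp only [Finset.card_filter]
    rw [Finset.sum_comm]
  rw [hswap]
  -- for each vertex v, count the edges at odd distance
  have key : ∀ v : V,
      (G.edgeFinset.filter (fun e => Odd (edgeDist G v e))).card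
        = (Finset.univ.filter (fun u => c u = c v)).card - 1 := by
    intro v
    choose! par hadj hlt using fun u (h : u ≠ v) => exists_closer_neighbor hconn h
    set F : V → Sym2 V := fun u => s(u, par u) with hF
    set S : Finset V := Finset.univ.filter (fun u => u ≠ v) with hS
    have hmemS : ∀ u, u ∈ S ↔ u ≠ v := by simp [hS]
    -- basic facts about F on S
    have hedge : ∀ u, u ≠ v → F u ∈ G.edgeFinset := by
      intro u hu
      simpa [hF, SimpleGraph.mem_edgeFinset] using hadj u hu
    have hdistF : ∀ u, u ≠ v → edgeDist G v (F u) = G.dist v (par u) := by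
      intro u hu
      simp only [hF, edgeDist, Sym2.lift_mk]
      exact min_eq_right (le_of_lt (hlt u hu))
    have hoddF : ∀ u, u ≠ v → (Odd (edgeDist G v (F u)) ↔ c u = c v) := by
      intro u hu
      rw [hdistF u hu, ← Nat.not_even_iff_odd, ← dist_color_parity c hc hconn v (par u)]
      have h1 := hc _ _ (hadj u hu)
      cases hcu : c u <;> cases hcv : c v <;> cases hcp : c (par u) <;> simp_all
    have hinj : Set.InjOn F S := by
      intro u hu u' hu' heq
      rw [Finset.mem_coe, hmemS] at hu hu'
      simp only [hF, Sym2.eq_iff] at heq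
      rcases heq with ⟨h1, _⟩ | ⟨h1, h2⟩
      · exact h1
      · exfalso
        have l1 := hlt u hu
        have l2 := hlt u' hu'
        rw [h2] at l1
        rw [← h1] at l2
        omega
    have hcardS : S.card = Fintype.card V - 1 := by
      rw [hS, Finset.filter_ne', Finset.card_erase_of_mem (Finset.mem_univ v),
        Finset.card_univ]
    have himage : S.image F = G.edgeFinset := by
      apply Finset.eq_of_subset_of_card_le
      · intro e he
        obtain ⟨u, hu, rfl⟩ := Finset.mem_image.mp he
        exact hedge u ((hmemS u).mp hu)
      · rw [Finset.card_image_of_injOn hinj, hcardS]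
        have := hT.card_edgeFinset
        omega
    rw [← himage, Finset.filter_image,
      Finset.card_image_of_injOn (hinj.mono (Finset.coe_subset.mpr (Finset.filter_subset _ S)))]
    have : S.filter (fun u => Odd (edgeDist G v (F u)))
        = (Finset.univ.filter (fun u => c u = c v)).erase v := by
      ext u
      simp only [Finset.mem_filter, Finset.mem_erase, hmemS u, Finset.mem_univ, true_and,
        hS, Finset.mem_filter]
      constructor
      · rintro ⟨hu, ho⟩
        exact ⟨hu, (hoddF u hu).mp ho⟩
      · rintro ⟨hu, hcu⟩
        exact ⟨hu, (hoddF u hu).mpr hcu⟩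
    rw [this, Finset.card_erase_of_mem (by simp)]
  simp only [key]
  -- split the outer sum by color
  rw [← Finset.sum_filter_add_sum_filter_not Finset.univ (fun v => c v = true)]
  have h1 : ∀ v ∈ Finset.univ.filter (fun v => c v = true),
      (Finset.univ.filter (fun u => c u = c v)).card - 1 = b - 1 := by
    intro v hv
    simp only [Finset.mem_filter, Finset.mem_univ, true_and] at hv
    have : (Finset.univ.filter (fun u => c u = c v))
        = Finset.univ.filter (fun u => c u = true) := by
      ext u; simp [hv]
    rw [this, hb]
  have h2 : ∀ v ∈ Finset.univ.filter (fun v => ¬ c v = true),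
      (Finset.univ.filter (fun u => c u = c v)).card - 1 = w - 1 := by
    intro v hv
    simp only [Finset.mem_filter, Finset.mem_univ, true_and, Bool.not_eq_true] at hv
    have : (Finset.univ.filter (fun u => c u = c v))
        = Finset.univ.filter (fun u => c u = false) := by
      ext u; simp [hv]
    rw [this, hw]
  rw [Finset.sum_congr rfl h1, Finset.sum_congr rfl h2, Finset.sum_const, Finset.sum_const,
    hb]
  have : (Finset.univ.filter (fun v => ¬ c v = true)).card = w := by
    rw [← hw]; congr 1; ext u; simp
  rw [this, smul_eq_mul, smul_eq_mul]
end

section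
/- Let T be a tree in which every edge e is associated with a set V_e of vertices: V_e is the unique set of vertices intersecting every edge of T except e in exactly one vertex and disjoint from e; then V_e equals the set of vertices at odd distance from e. -/
namespace SimpleGraph

variable {V : Type*} {G : SimpleGraph V}

/-- The defining property of the paper's `V_e`. -/
def IsAlternatingOff (G : SimpleGraph V) (e : Sym2 V) (S : Set V) : Prop :=
  (∀ v ∈ e, v ∉ S) ∧ ∀ u v, G.Adj u v → s(u, v) ≠ e → (u ∈ S ↔ v ∉ S)

theorem Preconnected.iff_of_forall_adj (hG : G.Preconnected) {P : V → Prop}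
    (h : ∀ ⦃u v⦄, G.Adj u v → (P u ↔ P v)) (u v : V) : P u ↔ P v := by
  obtain ⟨p⟩ := hG u v
  induction p with
  | nil => rfl
  | cons huw _ ih => exact (h huw).trans ih

theorem Preconnected.eq_of_isAlternatingOff (hG : G.Preconnected) {e : Sym2 V} {S T : Set V}
    (hS : G.IsAlternatingOff e S) (hT : G.IsAlternatingOff e T) : S = T := by
  have hagree : ∀ v ∈ e, (v ∈ S ↔ v ∈ T) := fun v hv => iff_of_false (hS.1 v hv) (hT.1 v hv)
  have hadj : ∀ ⦃u v⦄, G.Adj u v → ((u ∈ S ↔ u ∈ T) ↔ (v ∈ S ↔ v ∈ T)) := by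
    intro u v huv
    by_cases hue : s(u, v) = e
    · exact iff_of_true (hagree u (hue ▸ Sym2.mem_mk_left u v))
        (hagree v (hue ▸ Sym2.mem_mk_right u v))
    · have := hS.2 u v huv hue
      have := hT.2 u v huv hue
      tauto
  ext v
  exact (hG.iff_of_forall_adj hadj e.out.1 v).mp (hagree _ (Sym2.out_fst_mem e))

theorem Walk.dist_le_of_mem_support {u v w : V} (p : G.Walk u v) (hw : w ∈ p.support) :
    G.dist u w ≤ p.length := by
  classical exact (dist_le _).trans (p.length_takeUntil_le_length hw)

theorem Preconnected.eq_of_isBridge_of_adj (hG : G.Preconnected) {a b u v : V}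
    (hab : G.IsBridge s(a, b)) (huv : G.Adj u v)
    (hu : G.dist u b < G.dist u a) (hv : G.dist v a < G.dist v b) : s(u, v) = s(a, b) := by
  obtain ⟨P, hP⟩ := (hG v a).exists_walk_length_eq_dist
  obtain ⟨Q, hQ⟩ := (hG u b).exists_walk_length_eq_dist
  have hmem := isBridge_iff_forall_walk_mem_edges.mp hab (P.reverse.append (.cons huv.symm Q))
  simp only [Walk.edges_append, Walk.edges_reverse, Walk.edges_cons, List.mem_append,
    List.mem_reverse, List.mem_cons] at hmem
  rcases hmem with hP' | hvu | hQ'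
  · have := P.dist_le_of_mem_support (P.snd_mem_support_of_mem_edges hP')
    omega
  · exact (hvu.trans Sym2.eq_swap).symm
  · have := Q.dist_le_of_mem_support (Q.fst_mem_support_of_mem_edges hQ')
    omega

theorem IsTree.odd_edgeDist_iff_not_odd (hT : G.IsTree) {a b u v : V} (hab : G.Adj a b)
    (huv : G.Adj u v) (hne : s(u, v) ≠ s(a, b)) :
    Odd (edgeDist G u s(a, b)) ↔ ¬ Odd (edgeDist G v s(a, b)) := by
  have hbr := isAcyclic_iff_forall_adj_isBridge.mp hT.isAcyclic
  have hG := hT.connected.preconnected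
  have not_ba : ¬ (G.dist u b < G.dist u a ∧ G.dist v a < G.dist v b) :=
    fun h => hne (hG.eq_of_isBridge_of_adj (hbr hab) huv h.1 h.2)
  have not_ab : ¬ (G.dist u a < G.dist u b ∧ G.dist v b < G.dist v a) :=
    fun h => hne ((hG.eq_of_isBridge_of_adj (hbr hab.symm) huv h.1 h.2).trans Sym2.eq_swap)
  have hu := hT.dist_eq_dist_add_one_of_adj u hab
  have hv := hT.dist_eq_dist_add_one_of_adj v hab
  have ha := hT.dist_eq_dist_add_one_of_adj a huv
  have hb := hT.dist_eq_dist_add_one_of_adj b huv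
  rw [dist_comm, dist_comm (u := a) (v := v)] at ha
  rw [dist_comm, dist_comm (u := b) (v := v)] at hb
  show Odd (min (G.dist u a) (G.dist u b)) ↔ ¬ Odd (min (G.dist v a) (G.dist v b))
  rw [Nat.odd_iff, Nat.odd_iff]
  omega

theorem IsTree.isAlternatingOff_odd_edgeDist (hT : G.IsTree) {e : Sym2 V} (he : e ∈ G.edgeSet) :
    G.IsAlternatingOff e {v | Odd (edgeDist G v e)} := by
  induction e using Sym2.ind with
  | _ a b =>
  refine ⟨fun v hv => ?_, fun u v huv hne => hT.odd_edgeDist_iff_not_odd he huv hne⟩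
  rcases Sym2.mem_iff.mp hv with rfl | rfl <;> simp [edgeDist]

end SimpleGraph

theorem Finset.card_pair_inter_eq_one_iff {α : Type*} [DecidableEq α] {a b : α} (hab : a ≠ b)
    (s : Finset α) : (({a, b} : Finset α) ∩ s).card = 1 ↔ (a ∈ s ↔ b ∉ s) := by
  by_cases ha : a ∈ s <;> by_cases hb : b ∈ s <;>
    simp [Finset.insert_inter_of_mem, Finset.insert_inter_of_notMem, ha, hb, hab]

open scoped Classical

open SimpleGraph in
/-- In a tree, for each edge e, a set S is disjoint from e and meets every other edge
in exactly one vertex if and only if S is the set of vertices at odd distance from e. -/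
theorem odd_distance_set_characterization {V : Type*} [Fintype V] [DecidableEq V]
    (G : SimpleGraph V) [DecidableRel G.Adj] (hT : G.IsTree)
    (e : Sym2 V) (he : e ∈ G.edgeFinset) (S : Finset V) :
    ((∀ v ∈ e, v ∉ S) ∧
      ∀ u v : V, G.Adj u v → s(u, v) ≠ e → (({u, v} : Finset V) ∩ S).card = 1) ↔
    S = Finset.univ.filter (fun v => Odd (edgeDist G v e)) := by
  have hodd := hT.isAlternatingOff_odd_edgeDist (mem_edgeFinset.mp he)
  have halt : G.IsAlternatingOff e S ↔ ((∀ v ∈ e, v ∉ S) ∧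
      ∀ u v : V, G.Adj u v → s(u, v) ≠ e → (({u, v} : Finset V) ∩ S).card = 1) := by
    refine and_congr Iff.rfl (forall₂_congr fun u v => forall_congr' fun huv => ?_)
    rw [Finset.card_pair_inter_eq_one_iff huv.ne, Finset.mem_coe, Finset.mem_coe]
  rw [← halt, ← Finset.coe_inj, Finset.coe_filter_univ]
  exact ⟨fun h => hT.connected.preconnected.eq_of_isAlternatingOff h hodd, fun h => h ▸ hodd⟩
end

section
/- Let H be a 1-intersecting k-uniform hypergraph. Then the set of vertices of degree at least 2 is a kernel of H, and moreover it is the minimum kernel: every kernel of H contains all vertices of degree at least 2. -/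
/-!
Two distinct edges meet in exactly one vertex, and that vertex has degree at least 2; this gives
both kernel properties of the degree-≥2 vertices. Conversely, a vertex `v` of degree at least 2 is
the unique common vertex of two edges, so the traces of any kernel on those edges can only meet
in `v`, which therefore lies in the kernel.
-/

open Finset

namespace Finset

variable {V : Type*} [DecidableEq V] {H : Finset (Finset V)} {e f : Finset V} {v : V}

theorem two_le_card_filter_mem_of_mem_inter (he : e ∈ H) (hf : f ∈ H) (hef : e ≠ f)
    (hv : v ∈ e ∩ f) : 2 ≤ #(H.filter (fun g => v ∈ g)) := by
  rw [mem_inter] at hv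
  calc 2 = #{e, f} := (card_pair hef).symm
    _ ≤ _ := card_le_card (by simp [insert_subset_iff, he, hf, hv.1, hv.2])

theorem exists_ne_of_two_le_card_filter_mem (hv : 2 ≤ #(H.filter (fun g => v ∈ g))) :
    ∃ e ∈ H, ∃ f ∈ H, e ≠ f ∧ v ∈ e ∩ f := by
  obtain ⟨e, he, f, hf, hef⟩ := one_lt_card.mp hv
  rw [mem_filter] at he hf
  exact ⟨e, he.1, f, hf.1, hef, mem_inter.mpr ⟨he.2, hf.2⟩⟩

end Finset

theorem min_kernel_one_intersecting_general {V : Type*} [Fintype V] [DecidableEq V]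
    (H : Finset (Finset V)) (hH : 2 ≤ H.card)
    (hint : ∀ e ∈ H, ∀ f ∈ H, e ≠ f → (e ∩ f).card = 1) :
    (let IsKernel : Finset V → Prop := fun A =>
      (∀ e ∈ H, (e ∩ A).Nonempty) ∧
        ∀ e ∈ H, ∀ f ∈ H, e ≠ f → ((e ∩ A) ∩ (f ∩ A)).Nonempty
    let D2 : Finset V := Finset.univ.filter (fun v => 2 ≤ (H.filter (fun e => v ∈ e)).card)
    IsKernel D2 ∧ ∀ A : Finset V, IsKernel A → D2 ⊆ A) := by
  intro IsKernel D2
  have mem_D2 (v : V) : v ∈ D2 ↔ 2 ≤ #(H.filter (fun e => v ∈ e)) := by simp [D2]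
  have common_mem_D2 : ∀ e ∈ H, ∀ f ∈ H, e ≠ f → ∃ v ∈ e ∩ f, v ∈ D2 := by
    intro e he f hf hef
    obtain ⟨v, hv⟩ := card_pos.mp (by rw [hint e he f hf hef]; exact one_pos)
    exact ⟨v, hv, (mem_D2 v).mpr (two_le_card_filter_mem_of_mem_inter he hf hef hv)⟩
  refine ⟨⟨fun e he => ?_, fun e he f hf hef => ?_⟩, fun A hA v hv => ?_⟩
  · obtain ⟨f, hf, hfe⟩ := exists_mem_ne hH e
    obtain ⟨v, hv, hvD⟩ := common_mem_D2 e he f hf hfe.symm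
    exact ⟨v, mem_inter.mpr ⟨(mem_inter.mp hv).1, hvD⟩⟩
  · obtain ⟨v, hv, hvD⟩ := common_mem_D2 e he f hf hef
    rw [mem_inter] at hv
    exact ⟨v, by simp [hv.1, hv.2, hvD]⟩
  · obtain ⟨e, he, f, hf, hef, hvef⟩ := exists_ne_of_two_le_card_filter_mem ((mem_D2 v).mp hv)
    obtain ⟨w, hw⟩ := hA.2 e he f hf hef
    simp only [mem_inter] at hw
    have hwv : w = v :=
      card_le_one.mp (hint e he f hf hef).le w (mem_inter.mpr ⟨hw.1.1, hw.2.1⟩) v hvef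
    exact hwv ▸ hw.1.2

/-- In a 1-intersecting k-uniform hypergraph (with at least two edges), the set of
vertices of degree at least 2 is a kernel, and every kernel contains it. -/
theorem min_kernel_one_intersecting {V : Type*} [Fintype V] [DecidableEq V]
    (k : ℕ) (H : Finset (Finset V)) (hH : 2 ≤ H.card)
    (hunif : ∀ e ∈ H, e.card = k)
    (hint : ∀ e ∈ H, ∀ f ∈ H, e ≠ f → (e ∩ f).card = 1) :
    (let IsKernel : Finset V → Prop := fun A =>
      (∀ e ∈ H, (e ∩ A).Nonempty) ∧
        ∀ e ∈ H, ∀ f ∈ H, e ≠ f → ((e ∩ A) ∩ (f ∩ A)).Nonempty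
    let D2 : Finset V := Finset.univ.filter (fun v => 2 ≤ (H.filter (fun e => v ∈ e)).card)
    IsKernel D2 ∧ ∀ A : Finset V, IsKernel A → D2 ⊆ A) :=
  min_kernel_one_intersecting_general H hH hint
end
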